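/- Let K ≥ 4 and for 0 ≤ i ≤ K−1 let d_i = 1^i 0 1^{K−1−i} (a binary string of length K). Let 2 ≤ N ≤ K/2, let u₁,…,u_N be arbitrary binary strings, and let w = u₁ d₀ 1^K d₀^R u₂ d₁ d₁^R u₃ d₂ d₂^R ⋯ u_{N−1} d_{N−2} d_{N−2}^R u_N, where s^R denotes the reversal of s. Then any factor-free K-partition of w selects the string 1^K as well as the strings d_i and d_i^R for every i = 0,…,N−2 (each occurring delimiter is selected as a whole). -/

import Mathlib

/-- `P` is a `K`-partition of the string `w`: a sequence of nonempty strings of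
length at most `K` whose concatenation is `w`. -/
def IsPartition {α : Type*} (K : ℕ) (w : List α) (P : List (List α)) : Prop :=
  P.flatten = w ∧ ∀ p ∈ P, p ≠ [] ∧ p.length ≤ K

/-- A partition is factor-free if no selected string at one occurrence is a
factor (contiguous substring) of a selected string at another occurrence. -/
def FactorFree {α : Type*} (P : List (List α)) : Prop :=
  P.Pairwise fun a b => ¬ a <:+: b ∧ ¬ b <:+: a

/-- `glue d k [w₁, …, w_ℓ] = w₁ ++ d k ++ w₂ ++ d (k+1) ++ ⋯ ++ d (k+ℓ-2) ++ w_ℓ`. -/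
def glue {α : Type*} (d : ℕ → List α) : ℕ → List (List α) → List α
  | _, [] => []
  | _, [w] => w
  | k, w :: ws => w ++ d k ++ glue d (k + 1) ws

/-- `dd K i = 1^i 0 1^{K-1-i}` (a binary string of length `K`). -/
def dd (K i : ℕ) : List Bool :=
  List.replicate i true ++ [false] ++ List.replicate (K - 1 - i) true

/-!
Each delimiter of `w` contains a long run of `1`s between two `0`s. Since pieces have length at most
`K`, such a run is covered by the tail `1^c₁` of the piece through the left `0`, at most one
all-`1` piece (two would be factors of one another), and the head `1^c₃` of the piece through the
right `0`. In `d₀ 1^K d₀^R = 0 1^(3K-2) 0` the lengths force `c₁ = c₃ = K - 1` and a middle piece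
`1^K`. In `dᵢ dᵢ^R = 1^i 0 1^(2K-2-2i) 0 1^i` a middle piece would be a factor of the selected
`1^K`, and a piece `1^j 0 1^c₁` through the left `0` with `j < i` would be a factor of the already
selected `dⱼ`; hence that piece is exactly `dᵢ`, symmetrically the other one is `dᵢ^R`, and an
induction on `i` finishes the proof.
-/

open List

theorem List.exists_of_flatten_eq_append_cons {α : Type*} {P : List (List α)} {A B : List α}
    {a : α} (h : P.flatten = A ++ a :: B) :
    ∃ P₁ p₁ p₂ P₂, P = P₁ ++ (p₁ ++ a :: p₂) :: P₂ ∧ P₁.flatten ++ p₁ = A ∧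
      p₂ ++ P₂.flatten = B := by
  rcases flatten_eq_append_iff.1 h with ⟨P₁, P₂, rfl, rfl, hP₂⟩ | ⟨P₁, p₁, c, p₂, P₂, rfl, rfl, hc⟩
  · obtain ⟨Z, p₂, P₂, rfl, hZ, rfl⟩ := cons_eq_flatten_iff.1 hP₂
    exact ⟨P₁ ++ Z, [], p₂, P₂, by simp, by simp [flatten_eq_nil_iff.2 hZ], rfl⟩
  · obtain ⟨rfl, rfl⟩ := cons_eq_cons.1 hc
    exact ⟨P₁, p₁, p₂, P₂, rfl, rfl, rfl⟩

theorem List.replicate_infix_replicate_iff {α : Type*} {m n : ℕ} {b : α} :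
    replicate m b <:+: replicate n b ↔ m ≤ n := by
  simp [infix_replicate_iff]

namespace FactorFree

variable {α : Type*} {P E R : List (List α)}

theorem sublist (hff : FactorFree P) (h : R <+ P) : FactorFree R :=
  Pairwise.sublist h hff

theorem not_infix_of_mem_of_mem (hff : FactorFree (E ++ R)) {x y : List α} (hy : y ∈ E)
    (hx : x ∈ R) : ¬ x <:+: y :=
  ((pairwise_append.1 hff).2.2 y hy x hx).2

theorem eq_nil_or_eq_singleton_of_flatten_eq_replicate (hff : FactorFree P) {n : ℕ} {b : α}
    (h : P.flatten = replicate n b) : P = [] ∨ P = [replicate n b] := by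
  match P, hff, h with
  | [], _, _ => exact .inl rfl
  | [p], _, h => exact .inr (by simpa using h)
  | p :: q :: P, hff, h =>
    have hall : ∀ z ∈ p :: q :: P, z = replicate z.length b := fun z hz =>
      eq_replicate_length.2 fun x hx => eq_of_mem_replicate (h ▸ mem_flatten.2 ⟨z, hz, hx⟩)
    have hpq := (pairwise_cons.1 hff).1 q (by simp)
    rw [hall p (by simp), hall q (by simp), replicate_infix_replicate_iff,
      replicate_infix_replicate_iff] at hpq
    omega

theorem exists_split_run (hff : FactorFree P) {K m : ℕ} (hlen : ∀ p ∈ P, p.length ≤ K)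
    (hm : K ≤ m + 1) {A B : List α} {a b : α}
    (h : P.flatten = A ++ a :: (replicate m b ++ a :: B)) :
    ∃ P₁ s c₁ c₂ Q c₃ t P₂,
      P = P₁ ++ (s ++ a :: replicate c₁ b) :: (Q ++ (replicate c₃ b ++ a :: t) :: P₂) ∧
      P₁.flatten ++ s = A ∧ t ++ P₂.flatten = B ∧ c₁ + c₂ + c₃ = m ∧
      (Q = [] ∧ c₂ = 0 ∨ Q = [replicate c₂ b]) ∧ c₂ ≤ K ∧
      s.length + 1 + c₁ ≤ K ∧ c₃ + 1 + t.length ≤ K := by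
  obtain ⟨P₁, s, r, P', rfl, hA, hr⟩ := exists_of_flatten_eq_append_cons h
  have hsK : s.length + 1 + r.length ≤ K := by
    simpa [Nat.add_assoc, Nat.add_comm 1] using hlen (s ++ a :: r) (by simp)
  -- `K ≤ m + 1` keeps the piece through the first `a` from reaching the second one.
  obtain ⟨r', hrr'⟩ : r <+: replicate m b :=
    prefix_of_prefix_length_le ⟨_, hr⟩ (prefix_append _ _) (by simp; omega)
  obtain ⟨hrm, hr_eq, hr'_eq⟩ := append_eq_replicate_iff.1 hrr'
  have hP' : P'.flatten = r' ++ a :: B := by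
    rw [← hrr', append_assoc] at hr
    exact append_cancel_left hr
  obtain ⟨Q, t', t, P₂, rfl, hQt, rfl⟩ := exists_of_flatten_eq_append_cons hP'
  have htK : t'.length + 1 + t.length ≤ K := by
    simpa [Nat.add_assoc, Nat.add_comm 1] using hlen (t' ++ a :: t) (by simp)
  rw [hr'_eq] at hQt
  obtain ⟨hQt_len, hQ, ht'⟩ := append_eq_replicate_iff.1 hQt
  have hQ_sub : Q <+ P₁ ++ (s ++ a :: r) :: (Q ++ (t' ++ a :: t) :: P₂) :=
    ((sublist_append_left _ _).trans (sublist_cons_self _ _)).trans (sublist_append_right _ _)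
  have hQ_cases : Q = [] ∧ Q.flatten.length = 0 ∨ Q = [replicate Q.flatten.length b] :=
    ((hff.sublist hQ_sub).eq_nil_or_eq_singleton_of_flatten_eq_replicate hQ).imp_left
      fun hQ_nil => ⟨hQ_nil, by simp [hQ_nil]⟩
  refine ⟨P₁, s, r.length, Q.flatten.length, Q, t'.length, t, P₂, by rw [← hr_eq, ← ht'], hA,
    rfl, by omega, hQ_cases, ?_, hsK, htK⟩
  rcases hQ_cases with ⟨-, h0⟩ | hQ_single
  · omega
  · simpa using hlen (replicate Q.flatten.length b) (by rw [hQ_single]; simp)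

end FactorFree

theorem dd_eq (K i : ℕ) :
    dd K i = replicate i true ++ false :: replicate (K - 1 - i) true := by
  simp [dd]

theorem replicate_cons_replicate_infix_dd {K j c : ℕ} (h : c ≤ K - 1 - j) :
    replicate j true ++ false :: replicate c true <:+: dd K j := by
  refine IsPrefix.isInfix ⟨replicate (K - 1 - j - c) true, ?_⟩
  rw [dd_eq, append_assoc, cons_append, ← replicate_add, Nat.add_sub_cancel' h]

theorem replicate_cons_replicate_infix_reverse_dd {K j c : ℕ} (h : c ≤ K - 1 - j) :
    replicate c true ++ false :: replicate j true <:+: (dd K j).reverse := by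
  simpa using (replicate_cons_replicate_infix_dd h).reverse

def delimiter (K k : ℕ) : List Bool :=
  if k = 1 then dd K 0 ++ replicate K true ++ (dd K 0).reverse
  else dd K (k - 1) ++ (dd K (k - 1)).reverse

namespace FactorFree

variable {K i : ℕ} {P E R : List (List Bool)}

theorem le_length_of_append_cons_replicate_mem (hff : FactorFree (E ++ R))
    (hdd : ∀ j < i, dd K j ∈ E) {A s : List Bool} {c : ℕ}
    (hmem : s ++ false :: replicate c true ∈ R) (hs : s <:+ A ++ replicate i true)
    (hK : s.length + 1 + c ≤ K) : i ≤ s.length := by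
  by_contra! hi
  have hs_rep : s = replicate s.length true :=
    (suffix_replicate_iff.1 (suffix_of_suffix_length_le hs (suffix_append _ _) (by simp; omega))).2
  refine hff.not_infix_of_mem_of_mem (hdd _ hi) hmem ?_
  rw [hs_rep, length_replicate]
  exact replicate_cons_replicate_infix_dd (by omega)

theorem le_length_of_replicate_cons_append_mem (hff : FactorFree (E ++ R))
    (hdd : ∀ j < i, (dd K j).reverse ∈ E) {B t : List Bool} {c : ℕ}
    (hmem : replicate c true ++ false :: t ∈ R) (ht : t <+: replicate i true ++ B)
    (hK : c + 1 + t.length ≤ K) : i ≤ t.length := by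
  by_contra! hi
  have ht_rep : t = replicate t.length true :=
    (prefix_replicate_iff.1 (prefix_of_prefix_length_le ht (prefix_append _ _) (by simp; omega))).2
  refine hff.not_infix_of_mem_of_mem (hdd _ hi) hmem ?_
  rw [ht_rep, length_replicate]
  exact replicate_cons_replicate_infix_reverse_dd (by omega)

theorem exists_eq_dd_zero_block (hff : FactorFree P) (hlen : ∀ p ∈ P, p.length ≤ K)
    {A B : List Bool} (h : P.flatten = A ++ dd K 0 ++ replicate K true ++ (dd K 0).reverse ++ B) :
    ∃ P₁ P₂, P = P₁ ++ dd K 0 :: replicate K true :: (dd K 0).reverse :: P₂ ∧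
      P₂.flatten = B := by
  have hrun : P.flatten = A ++ false :: (replicate (K - 1 + K + (K - 1)) true ++ false :: B) := by
    simp [h, dd_eq, replicate_add, -replicate_append_replicate]
  obtain ⟨P₁, s, c₁, c₂, Q, c₃, t, P₂, rfl, -, hB, hsum, hQ, hc₂, hsK, htK⟩ :=
    hff.exists_split_run hlen (by omega) hrun
  obtain rfl : s = [] := length_eq_zero_iff.1 (by omega)
  obtain rfl : t = [] := length_eq_zero_iff.1 (by omega)
  obtain ⟨rfl, rfl, rfl⟩ : c₁ = K - 1 ∧ K = c₂ ∧ c₃ = K - 1 := by omega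
  obtain rfl : Q = [replicate K true] := hQ.resolve_left (by rintro ⟨-, h0⟩; omega)
  exact ⟨P₁, P₂, by simp [dd_eq], by simpa using hB⟩

theorem exists_eq_dd_block (hff : FactorFree P) (hlen : ∀ p ∈ P, p.length ≤ K) (hP : P = E ++ R)
    (hiK : 2 * i + 1 ≤ K) (hE : replicate K true ∈ E)
    (hdd : ∀ j < i, dd K j ∈ E ∧ (dd K j).reverse ∈ E)
    {A B : List Bool} (h : R.flatten = A ++ dd K i ++ (dd K i).reverse ++ B) :
    ∃ R₁ R₂, R = R₁ ++ dd K i :: (dd K i).reverse :: R₂ ∧ R₂.flatten = B := by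
  subst hP
  have hrun : R.flatten = (A ++ replicate i true) ++ false ::
      (replicate (K - 1 - i + (K - 1 - i)) true ++ false :: (replicate i true ++ B)) := by
    simp [h, dd_eq, replicate_add, -replicate_append_replicate]
  obtain ⟨R₁, s, c₁, c₂, Q, c₃, t, R₂, rfl, hA, hB, hsum, hQ, hc₂, hsK, htK⟩ :=
    (hff.sublist (sublist_append_right E R)).exists_split_run
      (fun p hp => hlen p (mem_append_right E hp)) (by omega) hrun
  have hs := hff.le_length_of_append_cons_replicate_mem (fun j hj => (hdd j hj).1) (by simp)
    ⟨_, hA⟩ hsK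
  have ht := hff.le_length_of_replicate_cons_append_mem (fun j hj => (hdd j hj).2) (by simp)
    ⟨_, hB⟩ htK
  obtain ⟨rfl, rfl⟩ : Q = [] ∧ c₂ = 0 := hQ.resolve_right fun hQ_single =>
    hff.not_infix_of_mem_of_mem hE (by simp [hQ_single]) (replicate_infix_replicate_iff.2 hc₂)
  obtain ⟨-, rfl⟩ := append_inj' hA (by simp; omega)
  obtain ⟨rfl, hR₂⟩ := append_inj hB (by simp; omega)
  obtain ⟨rfl, rfl⟩ : c₁ = K - 1 - i ∧ c₃ = K - 1 - i := by omega
  exact ⟨R₁, R₂, by simp [dd_eq], hR₂⟩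

theorem dd_mem_of_flatten_eq_glue (hff : FactorFree P) (hlen : ∀ p ∈ P, p.length ≤ K)
    (vs : List (List Bool)) {v : List Bool} (hi : 0 < i) (hiK : 2 * (i + vs.length) ≤ K + 1)
    (hP : P = E ++ R) (hE : replicate K true ∈ E)
    (hdd : ∀ j < i, dd K j ∈ E ∧ (dd K j).reverse ∈ E)
    (hR : R.flatten = glue (delimiter K) (i + 1) (v :: vs)) :
    ∀ j < i + vs.length, dd K j ∈ P ∧ (dd K j).reverse ∈ P := by
  induction vs generalizing i E R v with
  | nil =>
    intro j hj
    have hj_mem := hdd j (by simpa using hj)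
    exact ⟨hP ▸ mem_append_left R hj_mem.1, hP ▸ mem_append_left R hj_mem.2⟩
  | cons v' vs ih =>
    have hR' : R.flatten =
        v ++ dd K i ++ (dd K i).reverse ++ glue (delimiter K) (i + 1 + 1) (v' :: vs) := by
      have hdelim : delimiter K (i + 1) = dd K i ++ (dd K i).reverse := by
        rw [delimiter, if_neg (by omega), Nat.add_sub_cancel]
      rw [hR, append_assoc v, ← hdelim]
      rfl
    obtain ⟨R₁, R₂, rfl, hR₂⟩ :=
      hff.exists_eq_dd_block hlen hP (by simp at hiK; omega) hE hdd hR'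
    have hdd' : ∀ j < i + 1, dd K j ∈ E ++ R₁ ++ [dd K i, (dd K i).reverse] ∧
        (dd K j).reverse ∈ E ++ R₁ ++ [dd K i, (dd K i).reverse] := by
      intro j hj
      rcases Nat.lt_succ_iff_lt_or_eq.1 hj with hj | rfl
      · simp [hdd j hj]
      · simp
    intro j hj
    exact ih (Nat.succ_pos i) (by simp at hiK ⊢; omega) (by simp [hP]) (by simp [hE]) hdd' hR₂ j
      (by simp at hj; omega)

end FactorFree

theorem stmt_13_general (K : ℕ) (us : List (List Bool))
    (hN2 : 2 ≤ us.length) (hNK : 2 * us.length ≤ K) :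
    ∀ P, IsPartition K
        (glue (fun k =>
          if k = 1 then dd K 0 ++ List.replicate K true ++ (dd K 0).reverse
          else dd K (k - 1) ++ (dd K (k - 1)).reverse) 1 us) P →
      FactorFree P →
      List.replicate K true ∈ P ∧
        ∀ i, i ≤ us.length - 2 → dd K i ∈ P ∧ (dd K i).reverse ∈ P := by
  rintro P ⟨hflat, hpieces⟩ hff
  obtain ⟨u₁, u₂, vs, rfl⟩ : ∃ u₁ u₂ vs, us = u₁ :: u₂ :: vs := by
    match us, hN2 with
    | u₁ :: u₂ :: vs, _ => exact ⟨u₁, u₂, vs, rfl⟩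
  have hlen : ∀ p ∈ P, p.length ≤ K := fun p hp => (hpieces p hp).2
  change P.flatten = u₁ ++ delimiter K 1 ++ glue (delimiter K) (1 + 1) (u₂ :: vs) at hflat
  obtain ⟨P₁, P₂, rfl, hP₂⟩ := hff.exists_eq_dd_zero_block hlen
    (A := u₁) (B := glue (delimiter K) (1 + 1) (u₂ :: vs)) (by simp [hflat, delimiter])
  have hdd := hff.dd_mem_of_flatten_eq_glue hlen vs Nat.one_pos (by simp at hNK; omega)
    (E := P₁ ++ [dd K 0, replicate K true, (dd K 0).reverse]) (by simp) (by simp) (by simp) hP₂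
  exact ⟨by simp, fun i hi => hdd i (by simp at hi; omega)⟩

/-- Let `K ≥ 4`, `2 ≤ N ≤ K/2`, `us = [u₁, …, u_N]` arbitrary binary strings,
and `w = u₁ d₀ 1^K d₀^R u₂ d₁ d₁^R u₃ ⋯ u_{N−1} d_{N−2} d_{N−2}^R u_N`.  Then
any factor-free `K`-partition of `w` selects `1^K` and `d_i`, `d_i^R` for every
`i = 0, …, N−2` (each occurring delimiter selected as a whole). -/
theorem stmt_13 (K : ℕ) (hK : 4 ≤ K) (us : List (List Bool))
    (hN2 : 2 ≤ us.length) (hNK : 2 * us.length ≤ K) :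
    ∀ P, IsPartition K
        (glue (fun k =>
          if k = 1 then dd K 0 ++ List.replicate K true ++ (dd K 0).reverse
          else dd K (k - 1) ++ (dd K (k - 1)).reverse) 1 us) P →
      FactorFree P →
      List.replicate K true ∈ P ∧
        ∀ i, i ≤ us.length - 2 → dd K i ∈ P ∧ (dd K i).reverse ∈ P :=
  stmt_13_general K us hN2 hNK
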